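/- Fix τ > 0 and β > 0, and let s ≥ 0. Let λ_β(t) be the solution of λ̇ = −2λ/(1 + βλ) with λ(0) = s + τ, evaluated at T_β = βτ/2. Then λ_β(T_β) → s as β → ∞. That is: if λ_β(T_β) + β^{−1} log λ_β(T_β) = s + β^{−1} log(s + τ) and 0 < λ_β(T_β) ≤ s + τ, then lim_{β→∞} λ_β(T_β) = s, including the degenerate case s = 0. -/

import Mathlib

open Filter Real

/-! Multiplying the implicit equation by `β` gives `β (ℓ - s) = log (s + τ) - log ℓ`. Since
`ℓ ≤ s + τ` the right side is nonnegative, so `ℓ ≥ s`; and if `ℓ ≥ b > s` it is at most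
`log (s + τ) - log b`, a constant, which is beaten by `β (b - s)` once `β` is large. -/

section ImplicitEquation

variable {β x s c : ℝ}

lemma mul_sub_eq_log_sub_log (hβ : 0 < β)
    (h : x + β⁻¹ * log x = s + β⁻¹ * log c) : β * (x - s) = log c - log x := by
  field_simp at h
  linarith

lemma le_of_add_inv_mul_log_eq (hβ : 0 < β) (hx : 0 < x) (hxc : x ≤ c)
    (h : x + β⁻¹ * log x = s + β⁻¹ * log c) : s ≤ x := by
  have hlog : log x ≤ log c := log_le_log hx hxc
  have key := mul_sub_eq_log_sub_log hβ h
  nlinarith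

lemma lt_of_add_inv_mul_log_eq {b : ℝ} (hβ : 0 < β) (hb0 : 0 < b)
    (hβb : log c - log b < β * (b - s))
    (h : x + β⁻¹ * log x = s + β⁻¹ * log c) : x < b := by
  by_contra! hbx
  have hlog : log b ≤ log x := log_le_log hb0 hbx
  have key := mul_sub_eq_log_sub_log hβ h
  nlinarith

end ImplicitEquation

theorem eigenvalue_denoising_limit (τ s : ℝ) (hs : 0 ≤ s)
    (ℓ : ℝ → ℝ)
    (hpos : ∀ β > (0 : ℝ), 0 < ℓ β)
    (hle : ∀ β > (0 : ℝ), ℓ β ≤ s + τ)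
    (heq : ∀ β > (0 : ℝ),
      ℓ β + β⁻¹ * Real.log (ℓ β) = s + β⁻¹ * Real.log (s + τ)) :
    Tendsto ℓ atTop (nhds s) := by
  rw [tendsto_order]
  constructor
  · intro a has
    filter_upwards [eventually_gt_atTop 0] with β hβ
    exact has.trans_le (le_of_add_inv_mul_log_eq hβ (hpos β hβ) (hle β hβ) (heq β hβ))
  · intro b hsb
    have hsub : 0 < b - s := sub_pos.mpr hsb
    filter_upwards [eventually_gt_atTop 0,
      eventually_gt_atTop ((log (s + τ) - log b) / (b - s))] with β hβ hβb
    exact lt_of_add_inv_mul_log_eq hβ (hs.trans_lt hsb)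
      ((div_lt_iff₀ hsub).mp hβb) (heq β hβ)
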